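/- arXiv:1706.02391 — 2 statements merged into one kernel-verified Lean document; each statement's English description precedes it below -/
import Mathlib

section
/- Let Θ be a Jacobi-type pencil with associated operator A. Then for each n ≥ 0 there exist real numbers c_{n,0}, …, c_{n,n} with c_{n,n} > 0 such that A^n e₀ = c_{n,n} e_n + Σ_{j=0}^{n−1} c_{n,j} e_j. -/
open Polynomial MeasureTheory

noncomputable section

/-- The standard basis of the space of finitely supported complex sequences. -/
def e (n : ℕ) : ℕ →₀ ℂ := Finsupp.single n 1

/-- The standard basis extended by zero to negative indices. -/
def eZ (n : ℤ) : ℕ →₀ ℂ := if n < 0 then 0 else e n.toNat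

/-- Extension of a real sequence by zero to negative indices. -/
def extZ (a : ℕ → ℝ) (n : ℤ) : ℝ := if n < 0 then 0 else a n.toNat

/-- Extension of a sequence of polynomials by zero to negative indices. -/
def extP (p : ℕ → Polynomial ℂ) (n : ℤ) : Polynomial ℂ := if n < 0 then 0 else p n.toNat

/-- The data of a Jacobi-type pencil `Θ = (J₃, J₅, α, β)`:
`a`, `b` are the entries of the Jacobi matrix `J₃` (`a n > 0`);
`al`, `be`, `ga` are the entries of the five-diagonal matrix `J₅` (`ga n > 0`);
`α > 0`, `β ∈ ℝ`. -/
structure JacobiPencil where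
  a : ℕ → ℝ
  b : ℕ → ℝ
  al : ℕ → ℝ
  be : ℕ → ℝ
  ga : ℕ → ℝ
  α : ℝ
  β : ℝ
  ha : ∀ n, 0 < a n
  hga : ∀ n, 0 < ga n
  hα : 0 < α

/-- The `n`-th column `J₃ e_n = a_{n-1} e_{n-1} + b_n e_n + a_n e_{n+1}` of the Jacobi
matrix (terms with negative indices omitted). -/
def J3col (Θ : JacobiPencil) (n : ℕ) : ℕ →₀ ℂ :=
  (extZ Θ.a ((n : ℤ) - 1) : ℂ) • eZ ((n : ℤ) - 1) + (Θ.b n : ℂ) • e n + (Θ.a n : ℂ) • e (n + 1)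

/-- The `n`-th column
`J₅ e_n = γ_{n-2} e_{n-2} + β_{n-1} e_{n-1} + α_n e_n + β_n e_{n+1} + γ_n e_{n+2}`
of the five-diagonal matrix (terms with negative indices omitted). -/
def J5col (Θ : JacobiPencil) (n : ℕ) : ℕ →₀ ℂ :=
  (extZ Θ.ga ((n : ℤ) - 2) : ℂ) • eZ ((n : ℤ) - 2)
    + (extZ Θ.be ((n : ℤ) - 1) : ℂ) • eZ ((n : ℤ) - 1)
    + (Θ.al n : ℂ) • e n + (Θ.be n : ℂ) • e (n + 1) + (Θ.ga n : ℂ) • e (n + 2)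

/-- `A` is the associated operator of the Jacobi-type pencil `Θ`:
`A e₀ = (1/α)(e₁ - β e₀)` and `A (J₃ eₙ) = J₅ eₙ` for all `n`. -/
def IsAssociatedOperator (Θ : JacobiPencil) (A : Module.End ℂ (ℕ →₀ ℂ)) : Prop :=
  A (e 0) = ((Θ.α : ℂ))⁻¹ • (e 1 - (Θ.β : ℂ) • e 0) ∧ ∀ n : ℕ, A (J3col Θ n) = J5col Θ n

/-- `p` is the family of polynomials associated to the Jacobi-type pencil `Θ`:
`p₀ = 1`, `p₁(λ) = αλ + β`, and for all `n ≥ 0`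
`γ_n p_{n+2} = -γ_{n-2} p_{n-2} - (β_{n-1} - λ a_{n-1}) p_{n-1}
  - (α_n - λ b_n) p_n - (β_n - λ a_n) p_{n+1}`,
with `p_{-2} = p_{-1} = 0` and coefficients with negative indices set to zero. -/
def IsAssociatedPolynomials (Θ : JacobiPencil) (p : ℕ → Polynomial ℂ) : Prop :=
  p 0 = 1 ∧ p 1 = C (Θ.α : ℂ) * X + C (Θ.β : ℂ) ∧
  ∀ n : ℕ, C (Θ.ga n : ℂ) * p (n + 2) =
      - C (extZ Θ.ga ((n : ℤ) - 2) : ℂ) * extP p ((n : ℤ) - 2)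
      - (C (extZ Θ.be ((n : ℤ) - 1) : ℂ) - X * C (extZ Θ.a ((n : ℤ) - 1) : ℂ))
          * extP p ((n : ℤ) - 1)
      - (C (Θ.al n : ℂ) - X * C (Θ.b n : ℂ)) * p n
      - (C (Θ.be n : ℂ) - X * C (Θ.a n : ℂ)) * p (n + 1)

/-- The `l₂` inner product `Σ_{k≥0} f(k) conj(g(k))` of two finitely supported sequences. -/
def ipl2 (f g : ℕ →₀ ℂ) : ℂ := ∑ k ∈ f.support ∪ g.support, f k * (starRingEnd ℂ) (g k)

/-- Auxiliary: `v` is a real linear combination of `e 0, …, e k`. -/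
def Qrep (k : ℕ) (v : ℕ →₀ ℂ) : Prop :=
  ∃ d : ℕ → ℝ, v = ∑ j ∈ Finset.range (k + 1), (d j : ℂ) • e j

/-- Auxiliary: `v` is a real linear combination of `e 0, …, e k` with positive top coeff. -/
def Prep (k : ℕ) (v : ℕ →₀ ℂ) : Prop :=
  ∃ d : ℕ → ℝ, 0 < d k ∧ v = ∑ j ∈ Finset.range (k + 1), (d j : ℂ) • e j

lemma Prep_toQrep {k : ℕ} {v : ℕ →₀ ℂ} (h : Prep k v) : Qrep k v := ⟨h.choose, h.choose_spec.2⟩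

lemma Qrep_zero (k : ℕ) : Qrep k 0 := ⟨0, by simp⟩

lemma Qrep_add {k : ℕ} {v w : ℕ →₀ ℂ} (hv : Qrep k v) (hw : Qrep k w) : Qrep k (v + w) := by
  obtain ⟨d, rfl⟩ := hv; obtain ⟨c, rfl⟩ := hw
  refine ⟨fun j => d j + c j, ?_⟩
  rw [← Finset.sum_add_distrib]
  refine Finset.sum_congr rfl fun j _ => ?_
  push_cast
  rw [add_smul]

lemma Qrep_smul {k : ℕ} {v : ℕ →₀ ℂ} (r : ℝ) (hv : Qrep k v) : Qrep k ((r : ℂ) • v) := by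
  obtain ⟨d, rfl⟩ := hv
  refine ⟨fun j => r * d j, ?_⟩
  rw [Finset.smul_sum]
  refine Finset.sum_congr rfl fun j _ => ?_
  push_cast
  rw [smul_smul]

lemma Qrep_neg {k : ℕ} {v : ℕ →₀ ℂ} (hv : Qrep k v) : Qrep k (-v) := by
  have := Qrep_smul (-1) hv
  simpa using this

lemma Qrep_sub {k : ℕ} {v w : ℕ →₀ ℂ} (hv : Qrep k v) (hw : Qrep k w) : Qrep k (v - w) := by
  rw [sub_eq_add_neg]; exact Qrep_add hv (Qrep_neg hw)

lemma Qrep_mono {k m : ℕ} {v : ℕ →₀ ℂ} (h : k ≤ m) (hv : Qrep k v) : Qrep m v := by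
  obtain ⟨d, rfl⟩ := hv
  refine ⟨fun j => if j < k + 1 then d j else 0, ?_⟩
  have hsub : Finset.range (k + 1) ⊆ Finset.range (m + 1) :=
    Finset.range_subset_range.mpr (Nat.succ_le_succ h)
  rw [show (∑ j ∈ Finset.range (k + 1), (d j : ℂ) • e j)
      = ∑ j ∈ Finset.range (k + 1), ((if j < k + 1 then d j else 0 : ℝ) : ℂ) • e j from
    Finset.sum_congr rfl fun j hj => by
      simp only [Finset.mem_range] at hj; rw [if_pos hj]]
  exact Finset.sum_subset hsub fun x hx hx' => by
    simp only [Finset.mem_range] at hx hx'; rw [if_neg hx']; simp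

lemma Qrep_e {k j : ℕ} (h : j ≤ k) : Qrep k (e j) := by
  refine ⟨fun i => if i = j then 1 else 0, ?_⟩
  rw [Finset.sum_eq_single_of_mem j (Finset.mem_range.mpr (by omega))]
  · simp
  · intro b _ hb; simp [hb]

lemma Qrep_sum {k : ℕ} {s : Finset ℕ} {f : ℕ → ℕ →₀ ℂ} (h : ∀ j ∈ s, Qrep k (f j)) :
    Qrep k (∑ j ∈ s, f j) :=
  Finset.sum_induction f (Qrep k) (fun _ _ => Qrep_add) (Qrep_zero k) h

lemma Qrep_extZ (s : ℕ → ℝ) (m : ℤ) (k : ℕ) (h : m ≤ (k : ℤ)) :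
    Qrep k ((extZ s m : ℂ) • eZ m) := by
  by_cases hm : m < 0
  · rw [eZ, if_pos hm, smul_zero]; exact Qrep_zero k
  · rw [eZ, if_neg hm]
    exact Qrep_smul _ (Qrep_e (by omega : m.toNat ≤ k))

lemma Prep_single {k : ℕ} {r : ℝ} (hr : 0 < r) : Prep k ((r : ℂ) • e k) := by
  refine ⟨fun i => if i = k then r else 0, by simpa using hr, ?_⟩
  rw [Finset.sum_eq_single_of_mem k (Finset.self_mem_range_succ k)]
  · simp
  · intro b _ hb; simp [hb]

lemma Prep_add_Qrep {k : ℕ} {v w : ℕ →₀ ℂ} (hv : Prep (k + 1) v) (hw : Qrep k w) :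
    Prep (k + 1) (v + w) := by
  obtain ⟨d, hd, rfl⟩ := hv
  obtain ⟨c, rfl⟩ := hw
  refine ⟨fun j => d j + if j < k + 1 then c j else 0, by simpa using hd, ?_⟩
  have h2 : (∑ j ∈ Finset.range (k + 1), (c j : ℂ) • e j)
      = ∑ j ∈ Finset.range (k + 2), ((if j < k + 1 then c j else 0 : ℝ) : ℂ) • e j := by
    have hsub : Finset.range (k + 1) ⊆ Finset.range (k + 2) :=
      Finset.range_subset_range.mpr (by omega)
    rw [show (∑ j ∈ Finset.range (k + 1), (c j : ℂ) • e j)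
        = ∑ j ∈ Finset.range (k + 1), ((if j < k + 1 then c j else 0 : ℝ) : ℂ) • e j from
      Finset.sum_congr rfl fun j hj => by
        simp only [Finset.mem_range] at hj; rw [if_pos hj]]
    exact Finset.sum_subset hsub fun x hx hx' => by
      simp only [Finset.mem_range] at hx hx'; rw [if_neg hx']; simp
  rw [h2, ← Finset.sum_add_distrib]
  refine Finset.sum_congr rfl fun j _ => ?_
  push_cast
  rw [add_smul]

lemma Qrep_add_Prep {k : ℕ} {v w : ℕ →₀ ℂ} (hv : Qrep k v) (hw : Prep (k + 1) w) :
    Prep (k + 1) (v + w) := by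
  have := Prep_add_Qrep hw hv
  rwa [add_comm w v] at this

lemma Prep_smul {k : ℕ} {v : ℕ →₀ ℂ} {r : ℝ} (hr : 0 < r) (hv : Prep k v) :
    Prep k ((r : ℂ) • v) := by
  obtain ⟨d, hd, rfl⟩ := hv
  refine ⟨fun j => r * d j, mul_pos hr hd, ?_⟩
  rw [Finset.smul_sum]
  refine Finset.sum_congr rfl fun j _ => ?_
  push_cast
  rw [smul_smul]

lemma extZ_natCast (s : ℕ → ℝ) (n : ℕ) : extZ s (n : ℤ) = s n := by
  simp [extZ]

lemma eZ_natCast (n : ℕ) : eZ (n : ℤ) = e n := by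
  simp [eZ]

lemma Aen (Θ : JacobiPencil) (A : Module.End ℂ (ℕ →₀ ℂ))
    (hA : IsAssociatedOperator Θ A) : ∀ n : ℕ, Prep (n + 1) (A (e n)) := by
  intro n
  induction n using Nat.strong_induction_on with
  | _ n ih =>
    match n with
    | 0 =>
      have key : A (e 0) = (((Θ.α)⁻¹ : ℝ) : ℂ) • (((1 : ℝ) : ℂ) • e 1 + ((-Θ.β : ℝ) : ℂ) • e 0) := by
        rw [hA.1]
        push_cast
        module
      rw [key]
      exact Prep_smul (inv_pos.mpr Θ.hα)
        (Prep_add_Qrep (by simpa using Prep_single one_pos) (Qrep_smul _ (Qrep_e le_rfl)))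
    | 1 =>
      have h := hA.2 0
      have hz1 : eZ (-1) = 0 := by norm_num [eZ]
      have hz2 : eZ (-2) = 0 := by norm_num [eZ]
      simp only [J3col, J5col, Nat.cast_zero, zero_sub, hz1, hz2, smul_zero, zero_add,
        show (0 : ℕ) + 1 = 1 from rfl, show (0 : ℕ) + 2 = 2 from rfl] at h
      rw [map_add, _root_.map_smul, _root_.map_smul] at h
      have ha0 : (Θ.a 0 : ℂ) ≠ 0 := by exact_mod_cast (Θ.ha 0).ne'
      have h3 : (Θ.a 0 : ℂ) • A (e 1) =
          (Θ.al 0 : ℂ) • e 0 + (Θ.be 0 : ℂ) • e 1 + (Θ.ga 0 : ℂ) • e 2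
            - (Θ.b 0 : ℂ) • A (e 0) := by
        rw [← h]; abel
      have key : A (e 1) = (((Θ.a 0)⁻¹ : ℝ) : ℂ) •
          ((Θ.ga 0 : ℂ) • e 2 +
            ((Θ.al 0 : ℂ) • e 0 + (Θ.be 0 : ℂ) • e 1 - (Θ.b 0 : ℂ) • A (e 0))) := by
        rw [Complex.ofReal_inv, eq_inv_smul_iff₀ ha0, h3]
        abel
      rw [key]
      refine Prep_smul (inv_pos.mpr (Θ.ha 0)) ?_
      refine Prep_add_Qrep (Prep_single (Θ.hga 0)) ?_
      exact Qrep_sub (Qrep_add (Qrep_smul _ (Qrep_e (by omega)))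
        (Qrep_smul _ (Qrep_e le_rfl))) (Qrep_smul _ (Prep_toQrep (ih 0 (by omega))))
    | (m + 2) =>
      have h := hA.2 (m + 1)
      simp only [J3col, J5col] at h
      rw [show ((m + 1 : ℕ) : ℤ) - 1 = ((m : ℕ) : ℤ) from by push_cast; ring,
        show ((m + 1 : ℕ) : ℤ) - 2 = ((m : ℕ) : ℤ) - 1 from by push_cast; ring,
        show m + 1 + 1 = m + 2 from by omega, show m + 1 + 2 = m + 3 from by omega] at h
      simp only [extZ_natCast, eZ_natCast] at h
      rw [map_add, map_add, _root_.map_smul, _root_.map_smul, _root_.map_smul] at h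
      have ha : (Θ.a (m + 1) : ℂ) ≠ 0 := by exact_mod_cast (Θ.ha (m + 1)).ne'
      have h3 : (Θ.a (m + 1) : ℂ) • A (e (m + 2)) =
          (extZ Θ.ga ((m : ℤ) - 1) : ℂ) • eZ ((m : ℤ) - 1) + (Θ.be m : ℂ) • e m
            + (Θ.al (m + 1) : ℂ) • e (m + 1) + (Θ.be (m + 1) : ℂ) • e (m + 2)
            + (Θ.ga (m + 1) : ℂ) • e (m + 3)
            - (Θ.a m : ℂ) • A (e m) - (Θ.b (m + 1) : ℂ) • A (e (m + 1)) := by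
        rw [← h]; abel
      have key : A (e (m + 2)) = (((Θ.a (m + 1))⁻¹ : ℝ) : ℂ) •
          ((Θ.ga (m + 1) : ℂ) • e (m + 3) +
            ((extZ Θ.ga ((m : ℤ) - 1) : ℂ) • eZ ((m : ℤ) - 1)
              + ((Θ.be m : ℂ) • e m + (Θ.al (m + 1) : ℂ) • e (m + 1)
                + (Θ.be (m + 1) : ℂ) • e (m + 2)
                - (Θ.a m : ℂ) • A (e m) - (Θ.b (m + 1) : ℂ) • A (e (m + 1))))) := by
        rw [Complex.ofReal_inv, eq_inv_smul_iff₀ ha, h3]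
        abel
      rw [key]
      refine Prep_smul (inv_pos.mpr (Θ.ha (m + 1))) ?_
      refine Prep_add_Qrep (Prep_single (Θ.hga (m + 1))) ?_
      refine Qrep_add (Qrep_extZ _ _ _ (by omega)) ?_
      refine Qrep_sub (Qrep_sub (Qrep_add (Qrep_add ?_ ?_) ?_) ?_) ?_
      · exact Qrep_smul _ (Qrep_e (by omega))
      · exact Qrep_smul _ (Qrep_e (by omega))
      · exact Qrep_smul _ (Qrep_e le_rfl)
      · exact Qrep_smul _ (Qrep_mono (by omega) (Prep_toQrep (ih m (by omega))))
      · exact Qrep_smul _ (Prep_toQrep (ih (m + 1) (by omega)))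

/-- For each `n` there are reals `c_{n,0}, …, c_{n,n}` with `c_{n,n} > 0` such that
`Aⁿ e₀ = c_{n,n} e_n + Σ_{j=0}^{n-1} c_{n,j} e_j`. -/
theorem powers_of_A_on_e0 (Θ : JacobiPencil) (A : Module.End ℂ (ℕ →₀ ℂ))
    (hA : IsAssociatedOperator Θ A) (n : ℕ) :
    ∃ c : ℕ → ℝ, 0 < c n ∧
      (A ^ n) (e 0) = ∑ j ∈ Finset.range (n + 1), (c j : ℂ) • e j := by
  show Prep n ((A ^ n) (e 0))
  induction n with
  | zero =>
    rw [pow_zero]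
    have : (1 : Module.End ℂ (ℕ →₀ ℂ)) (e 0) = e 0 := rfl
    rw [this, show e 0 = (((1 : ℝ)) : ℂ) • e 0 from by simp]
    exact Prep_single one_pos
  | succ n ih =>
    obtain ⟨d, hd, hrep⟩ := ih
    rw [pow_succ', Module.End.mul_apply, hrep, map_sum]
    simp only [LinearMap.map_smul]
    rw [Finset.sum_range_succ]
    refine Qrep_add_Prep ?_ (Prep_smul hd (Aen Θ A hA n))
    · refine Qrep_sum fun j hj => ?_
      simp only [Finset.mem_range] at hj
      exact Qrep_smul _ (Qrep_mono (by omega) (Prep_toQrep (Aen Θ A hA j)))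

end
end

section
/- Let σ be a nonnegative Borel measure on ℝ with σ(ℝ) = 1, all power moments finite, and ∫|g|² dσ > 0 for every nonzero complex polynomial g; let (r_n) be the orthonormal polynomials of σ (deg r_n = n, positive leading coefficients, ⟨r_n, r_m⟩_σ = δ_{n,m}); and let T be a linear operator on complex polynomials satisfying conditions (ii) and (iii). Define g_{m,n} := ⟨T(x·r_n), r_m⟩_σ. Then: every g_{m,n} is a real number; g_{m,n} = g_{n,m} for all m, n; g_{m,n} = 0 whenever m > n + 2 (hence whenever |m − n| > 2); and g_{n+2,n} > 0 for all n ≥ 0. In other words, the matrix (g_{m,n}) is a real symmetric five-diagonal matrix with positive entries on the second subdiagonal. -/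
open Polynomial MeasureTheory

noncomputable section

/-- The inner product `⟨u, v⟩_σ = ∫ u(x) conj(v(x)) dσ(x)` of two complex polynomials. -/
def ipm (σ : Measure ℝ) (u v : Polynomial ℂ) : ℂ :=
  ∫ x, u.eval (x : ℂ) * (starRingEnd ℂ) (v.eval (x : ℂ)) ∂σ

/-- All power moments of `σ` are finite. -/
def HasFiniteMoments (σ : Measure ℝ) : Prop := ∀ k : ℕ, Integrable (fun x => x ^ k) σ

/-- `∫ |g|² dσ > 0` for every nonzero complex polynomial `g`. -/
def PosOnPolys (σ : Measure ℝ) : Prop :=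
  ∀ g : Polynomial ℂ, g ≠ 0 → 0 < ∫ x, ‖g.eval (x : ℂ)‖ ^ 2 ∂σ

/-- Condition (ii): for each `k`, `T x^k = ξ_{k,k+1} x^{k+1} + Σ_{j=0}^k ξ_{k,j} x^j`
with `ξ_{k,k+1} > 0` and all `ξ_{k,j}` real. -/
def CondII (T : Module.End ℂ (Polynomial ℂ)) : Prop :=
  ∀ k : ℕ, ∃ ξ : ℕ → ℝ, 0 < ξ (k + 1) ∧
    T (X ^ k) = ∑ j ∈ Finset.range (k + 2), C (ξ j : ℂ) * X ^ j

/-- Condition (iii): `⟨T(x·u), v⟩_σ = ⟨u, T(x·v)⟩_σ` for all polynomials `u`, `v`,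
i.e., the operator `T Λ₀` is symmetric. -/
def CondIII (σ : Measure ℝ) (T : Module.End ℂ (Polynomial ℂ)) : Prop :=
  ∀ u v : Polynomial ℂ, ipm σ (T (X * u)) v = ipm σ u (T (X * v))

/-- The entry `g_{m,n} = ⟨T(x·r_n), r_m⟩_σ`. -/
def gEntry (σ : Measure ℝ) (T : Module.End ℂ (Polynomial ℂ)) (r : ℕ → Polynomial ℂ)
    (m n : ℕ) : ℂ :=
  ipm σ (T (X * r n)) (r m)

/-!
The orthonormal polynomials have real coefficients (they are unique given real leading
coefficients, and their conjugates are orthonormal too), and by (ii) `T` maps real polynomials to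
real polynomials, so every `g_{m,n}` is real; (iii) and conjugate symmetry of `⟨·,·⟩_σ` then make
`g` symmetric. By (ii), `T` raises degrees by at most one, so `T(x rₙ)` has degree `≤ n + 2` and is
orthogonal to `r_m` for `m > n + 2`. Its coefficient of `x^{n+2}` is `lc(rₙ) ξ_{n+1,n+2}`, whence
`g_{n+2,n} = lc(rₙ) ξ_{n+1,n+2} / lc(r_{n+2}) > 0`.
-/

open scoped ComplexOrder

theorem Polynomial.eval_ofReal_map_conj (p : ℂ[X]) (x : ℝ) :
    (p.map (starRingEnd ℂ)).eval (x : ℂ) = starRingEnd ℂ (p.eval (x : ℂ)) := by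
  rw [← eval_map_apply, Complex.conj_ofReal]

theorem Polynomial.map_conj_map_conj (p : ℂ[X]) :
    (p.map (starRingEnd ℂ)).map (starRingEnd ℂ) = p := by
  ext i
  simp only [coeff_map, Complex.conj_conj]

section InnerProduct

variable {σ : Measure ℝ}

theorem HasFiniteMoments.integrable_eval (hmom : HasFiniteMoments σ) (p : ℂ[X]) :
    Integrable (fun x : ℝ => p.eval (x : ℂ)) σ := by
  simp_rw [p.eval_eq_sum_range]
  refine integrable_finsetSum _ fun k _ => ?_
  simpa using ((hmom k).ofReal (𝕜 := ℂ)).const_mul (p.coeff k)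

theorem HasFiniteMoments.integrable_eval_mul_conj (hmom : HasFiniteMoments σ) (u v : ℂ[X]) :
    Integrable (fun x : ℝ => u.eval (x : ℂ) * starRingEnd ℂ (v.eval (x : ℂ))) σ := by
  simpa only [eval_mul, eval_ofReal_map_conj] using
    hmom.integrable_eval (u * v.map (starRingEnd ℂ))

theorem ipm_isLinearMap_left (hmom : HasFiniteMoments σ) (v : ℂ[X]) :
    IsLinearMap ℂ (ipm σ · v) where
  map_add u u' := by
    simp only [ipm, eval_add, add_mul]
    exact integral_add (hmom.integrable_eval_mul_conj u v) (hmom.integrable_eval_mul_conj u' v)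
  map_smul a u := by
    simp only [ipm, eval_smul, smul_eq_mul, mul_assoc]
    exact integral_const_mul a _

def ipmLeft (hmom : HasFiniteMoments σ) (v : ℂ[X]) : ℂ[X] →ₗ[ℂ] ℂ :=
  IsLinearMap.mk' _ (ipm_isLinearMap_left hmom v)

@[simp]
theorem ipmLeft_apply (hmom : HasFiniteMoments σ) (u v : ℂ[X]) :
    ipmLeft hmom v u = ipm σ u v :=
  rfl

theorem ipm_conj_symm (u v : ℂ[X]) : starRingEnd ℂ (ipm σ v u) = ipm σ u v := by
  rw [ipm, ← integral_conj]
  simp only [map_mul, Complex.conj_conj, mul_comm, ipm]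

theorem ipm_map_conj (u v : ℂ[X]) :
    ipm σ (u.map (starRingEnd ℂ)) (v.map (starRingEnd ℂ)) = starRingEnd ℂ (ipm σ u v) := by
  rw [ipm, ipm, ← integral_conj]
  simp only [eval_ofReal_map_conj, map_mul]

theorem ipm_im_eq_zero {u v : ℂ[X]} (hu : u.map (starRingEnd ℂ) = u)
    (hv : v.map (starRingEnd ℂ) = v) : (ipm σ u v).im = 0 :=
  Complex.conj_eq_iff_im.mp (by rw [← ipm_map_conj, hu, hv])

theorem ipm_self (g : ℂ[X]) : ipm σ g g = ((∫ x, ‖g.eval (x : ℂ)‖ ^ 2 ∂σ : ℝ) : ℂ) := by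
  simp only [ipm, Complex.mul_conj, Complex.normSq_eq_norm_sq]
  exact integral_ofReal

theorem PosOnPolys.eq_zero_of_ipm_self (hpos : PosOnPolys σ) {g : ℂ[X]}
    (h : ipm σ g g = 0) : g = 0 := by
  by_contra hg
  rw [ipm_self, Complex.ofReal_eq_zero] at h
  exact (hpos g hg).ne' h

end InnerProduct

theorem Polynomial.leadingCoeff_eq_coeff_of_degree_eq {R : Type*} [Semiring R] {p : R[X]} {n : ℕ}
    (h : p.degree = n) : p.leadingCoeff = p.coeff n := by
  rw [leadingCoeff, natDegree_eq_of_degree_eq_some h]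

theorem Polynomial.degree_sub_C_mul_lt {K : Type*} [Field K] {p q : K[X]} {m : ℕ}
    (hp : p.degree ≤ m) (hq : q.degree = m) :
    (p - C (p.coeff m / q.leadingCoeff) * q).degree < m := by
  have hlc : q.leadingCoeff ≠ 0 := leadingCoeff_ne_zero.mpr (ne_zero_of_coe_le_degree hq.ge)
  rw [degree_lt_iff_coeff_zero]
  intro j hj
  rcases hj.eq_or_lt with rfl | hj
  · rw [coeff_sub, coeff_C_mul, ← leadingCoeff_eq_coeff_of_degree_eq hq, div_mul_cancel₀ _ hlc,
      sub_self]
  · have hj' : (m : WithBot ℕ) < j := by exact_mod_cast hj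
    rw [coeff_sub, coeff_C_mul, coeff_eq_zero_of_degree_lt (hp.trans_lt hj'),
      coeff_eq_zero_of_degree_lt (hq.trans_lt hj'), mul_zero, sub_self]

section Orthonormal

variable {σ : Measure ℝ} {r : ℕ → ℂ[X]}

theorem ipm_eq_zero_of_degree_lt (hmom : HasFiniteMoments σ) (hdeg : ∀ n : ℕ, (r n).degree = n)
    (horth : ∀ n m : ℕ, ipm σ (r n) (r m) = if n = m then 1 else 0)
    {m : ℕ} {p : ℂ[X]} (hp : p.degree < m) : ipm σ p (r m) = 0 := by
  let S : Sequence ℂ := ⟨r, hdeg⟩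
  have hunit (i : ℕ) (_ : i < m) : IsUnit (S i).leadingCoeff :=
    isUnit_iff_ne_zero.mpr (leadingCoeff_ne_zero.mpr (S.ne_zero i))
  have hker : degreeLT ℂ m ≤ LinearMap.ker (ipmLeft hmom (r m)) := by
    rw [← S.span_degreeLT hunit, Submodule.span_le]
    rintro _ ⟨i, hi, rfl⟩
    simpa [S, horth] using (Set.mem_Iio.mp hi).ne
  exact hker (mem_degreeLT.mpr hp)

theorem ipm_eq_coeff_div_leadingCoeff (hmom : HasFiniteMoments σ)
    (hdeg : ∀ n : ℕ, (r n).degree = n)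
    (horth : ∀ n m : ℕ, ipm σ (r n) (r m) = if n = m then 1 else 0)
    {m : ℕ} {p : ℂ[X]} (hp : p.degree ≤ m) :
    ipm σ p (r m) = p.coeff m / (r m).leadingCoeff := by
  have h := ipm_eq_zero_of_degree_lt hmom hdeg horth (degree_sub_C_mul_lt hp (hdeg m))
  rwa [← ipmLeft_apply hmom, map_sub, ← smul_eq_C_mul, map_smul, ipmLeft_apply, ipmLeft_apply,
    horth, if_pos rfl, smul_eq_mul, mul_one, sub_eq_zero] at h

/-- The conjugate `r̄ₙ` has the same degree and leading coefficient as `rₙ`, so `r̄ₙ - rₙ` has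
lower degree; it is orthogonal to `rₙ` and, by conjugating, to `r̄ₙ`, hence to itself. -/
theorem map_conj_eq_self_of_orthonormal (hmom : HasFiniteMoments σ) (hpos : PosOnPolys σ)
    (hdeg : ∀ n : ℕ, (r n).degree = n) (hlead : ∀ n : ℕ, ((r n).leadingCoeff).im = 0)
    (horth : ∀ n m : ℕ, ipm σ (r n) (r m) = if n = m then 1 else 0) (n : ℕ) :
    (r n).map (starRingEnd ℂ) = r n := by
  set d := (r n).map (starRingEnd ℂ) - r n
  have hinj : Function.Injective (starRingEnd ℂ) := (starRingEnd ℂ).injective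
  have hd : d.degree < n := by
    rw [← hdeg n, ← degree_map (r n) (starRingEnd ℂ)]
    refine degree_sub_lt_left (by rw [degree_map]) ?_ ?_
    · exact (Polynomial.map_ne_zero_iff hinj).mpr (ne_zero_of_coe_le_degree (hdeg n).ge)
    · rw [leadingCoeff_map_of_injective hinj, Complex.conj_eq_iff_im.mpr (hlead n)]
  have hd_conj : (d.map (starRingEnd ℂ)).degree < n := by rwa [degree_map]
  have horth_r : ipm σ d (r n) = 0 := ipm_eq_zero_of_degree_lt hmom hdeg horth hd
  have horth_conj : ipm σ d ((r n).map (starRingEnd ℂ)) = 0 := by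
    rw [← map_conj_map_conj d, ipm_map_conj,
      ipm_eq_zero_of_degree_lt hmom hdeg horth hd_conj, map_zero]
  have hself : ipm σ d d = 0 := by
    calc ipm σ d d = ipm σ ((r n).map (starRingEnd ℂ)) d - ipm σ (r n) d :=
          map_sub (ipmLeft hmom d) _ _
      _ = 0 := by rw [← ipm_conj_symm, horth_conj, ← ipm_conj_symm, horth_r, map_zero, sub_zero]
  exact sub_eq_zero.mp (hpos.eq_zero_of_ipm_self hself)

end Orthonormal

theorem LinearMap.polynomial_apply_eq_sum {R M : Type*} [CommSemiring R] [AddCommMonoid M]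
    [Module R M] (f : R[X] →ₗ[R] M) {d : ℕ} {p : R[X]} (hp : p.natDegree < d) :
    f p = ∑ i ∈ Finset.range d, p.coeff i • f (X ^ i) := by
  conv_lhs => rw [p.as_sum_range' d hp]
  simp only [map_sum, ← C_mul_X_pow_eq_monomial, ← smul_eq_C_mul, map_smul]

namespace CondII

variable {T : Module.End ℂ ℂ[X]}

theorem map_conj_X_pow (hII : CondII T) (k : ℕ) :
    (T (X ^ k)).map (starRingEnd ℂ) = T (X ^ k) := by
  obtain ⟨ξ, -, h⟩ := hII k
  simp only [h, Polynomial.map_sum, Polynomial.map_mul, Polynomial.map_pow, map_X, map_C,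
    Complex.conj_ofReal]

theorem degree_X_pow_le (hII : CondII T) (k : ℕ) : (T (X ^ k)).degree ≤ (k + 1 : ℕ) := by
  obtain ⟨ξ, -, h⟩ := hII k
  rw [h]
  refine (degree_sum_le _ _).trans (Finset.sup_le fun j hj => ?_)
  exact (degree_C_mul_X_pow_le _ _).trans (by exact_mod_cast Finset.mem_range_succ_iff.mp hj)

theorem coeff_X_pow_succ_pos (hII : CondII T) (k : ℕ) : 0 < (T (X ^ k)).coeff (k + 1) := by
  obtain ⟨ξ, hξ, h⟩ := hII k
  have hcoeff : (T (X ^ k)).coeff (k + 1) = ξ (k + 1) := by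
    simp only [h, finsetSum_coeff, coeff_C_mul_X_pow]
    rw [Finset.sum_ite_eq, if_pos (Finset.self_mem_range_succ _)]
  rw [hcoeff]
  exact_mod_cast hξ

theorem map_conj_apply (hII : CondII T) {p : ℂ[X]} (hp : p.map (starRingEnd ℂ) = p) :
    (T p).map (starRingEnd ℂ) = T p := by
  rw [T.polynomial_apply_eq_sum (Nat.lt_succ_self p.natDegree), Polynomial.map_sum]
  refine Finset.sum_congr rfl fun i _ => ?_
  rw [smul_eq_C_mul, Polynomial.map_mul, map_C, hII.map_conj_X_pow, ← coeff_map, hp]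

theorem degree_apply_le (hII : CondII T) {d : ℕ} {p : ℂ[X]} (hp : p.natDegree ≤ d) :
    (T p).degree ≤ (d + 1 : ℕ) := by
  rw [T.polynomial_apply_eq_sum (Nat.lt_succ_of_le hp)]
  refine (degree_sum_le _ _).trans (Finset.sup_le fun i hi => ?_)
  refine (degree_smul_le _ _).trans ((hII.degree_X_pow_le i).trans ?_)
  exact_mod_cast Nat.succ_le_succ (Finset.mem_range_succ_iff.mp hi)

theorem coeff_apply_succ (hII : CondII T) {d : ℕ} {p : ℂ[X]} (hp : p.natDegree ≤ d) :
    (T p).coeff (d + 1) = p.coeff d * (T (X ^ d)).coeff (d + 1) := by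
  rw [T.polynomial_apply_eq_sum (Nat.lt_succ_of_le hp), Finset.sum_range_succ, coeff_add,
    coeff_smul, smul_eq_mul, add_eq_right, finsetSum_coeff]
  refine Finset.sum_eq_zero fun i hi => ?_
  rw [coeff_smul, coeff_eq_zero_of_degree_lt ((hII.degree_X_pow_le i).trans_lt ?_), smul_zero]
  exact_mod_cast Nat.succ_lt_succ (Finset.mem_range.mp hi)

end CondII

section Entries

variable {σ : Measure ℝ} {T : Module.End ℂ ℂ[X]} {r : ℕ → ℂ[X]}

theorem gEntry_im_eq_zero (hII : CondII T) (hreal : ∀ n, (r n).map (starRingEnd ℂ) = r n)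
    (m n : ℕ) : (gEntry σ T r m n).im = 0 := by
  refine ipm_im_eq_zero (hII.map_conj_apply ?_) (hreal m)
  rw [Polynomial.map_mul, map_X, hreal]

theorem gEntry_comm (hIII : CondIII σ T) (him : ∀ m n, (gEntry σ T r m n).im = 0) (m n : ℕ) :
    gEntry σ T r m n = gEntry σ T r n m := by
  rw [gEntry, hIII, ← ipm_conj_symm, ← gEntry, Complex.conj_eq_iff_im.mpr (him n m)]

theorem natDegree_X_mul_eq (hdeg : ∀ n : ℕ, (r n).degree = n) (n : ℕ) :
    (X * r n).natDegree = n + 1 := by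
  rw [natDegree_X_mul (ne_zero_of_coe_le_degree (hdeg n).ge),
    natDegree_eq_of_degree_eq_some (hdeg n)]

theorem degree_apply_X_mul_le (hII : CondII T) (hdeg : ∀ n : ℕ, (r n).degree = n) (n : ℕ) :
    (T (X * r n)).degree ≤ (n + 2 : ℕ) :=
  hII.degree_apply_le (natDegree_X_mul_eq hdeg n).le

theorem gEntry_eq_zero_of_lt (hmom : HasFiniteMoments σ) (hdeg : ∀ n : ℕ, (r n).degree = n)
    (horth : ∀ n m : ℕ, ipm σ (r n) (r m) = if n = m then 1 else 0) (hII : CondII T)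
    {m n : ℕ} (hmn : n + 2 < m) : gEntry σ T r m n = 0 :=
  ipm_eq_zero_of_degree_lt hmom hdeg horth
    ((degree_apply_X_mul_le hII hdeg n).trans_lt (by exact_mod_cast hmn))

theorem gEntry_add_two (hmom : HasFiniteMoments σ) (hdeg : ∀ n : ℕ, (r n).degree = n)
    (horth : ∀ n m : ℕ, ipm σ (r n) (r m) = if n = m then 1 else 0) (hII : CondII T) (n : ℕ) :
    gEntry σ T r (n + 2) n =
      (r n).leadingCoeff * (T (X ^ (n + 1))).coeff (n + 2) / (r (n + 2)).leadingCoeff := by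
  rw [gEntry, ipm_eq_coeff_div_leadingCoeff hmom hdeg horth (degree_apply_X_mul_le hII hdeg n),
    hII.coeff_apply_succ (natDegree_X_mul_eq hdeg n).le, coeff_X_mul,
    leadingCoeff_eq_coeff_of_degree_eq (hdeg n)]

end Entries

theorem gMatrix_real_symmetric_fivediagonal_general (σ : Measure ℝ)
    (hmom : HasFiniteMoments σ) (hpos : PosOnPolys σ)
    (r : ℕ → Polynomial ℂ) (hdeg : ∀ n : ℕ, (r n).degree = n)
    (hlead : ∀ n : ℕ, 0 < ((r n).leadingCoeff).re ∧ ((r n).leadingCoeff).im = 0)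
    (horth : ∀ n m : ℕ, ipm σ (r n) (r m) = if n = m then 1 else 0)
    (T : Module.End ℂ (Polynomial ℂ)) (hII : CondII T) (hIII : CondIII σ T) :
    (∀ m n : ℕ, (gEntry σ T r m n).im = 0) ∧
    (∀ m n : ℕ, gEntry σ T r m n = gEntry σ T r n m) ∧
    (∀ m n : ℕ, n + 2 < m → gEntry σ T r m n = 0) ∧
    (∀ m n : ℕ, n + 2 < m ∨ m + 2 < n → gEntry σ T r m n = 0) ∧
    (∀ n : ℕ, 0 < (gEntry σ T r (n + 2) n).re) := by
  have hreal := map_conj_eq_self_of_orthonormal hmom hpos hdeg (fun n => (hlead n).2) horth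
  have him := gEntry_im_eq_zero (σ := σ) hII hreal
  have hsymm := gEntry_comm hIII him
  have hzero (m n : ℕ) := gEntry_eq_zero_of_lt (m := m) (n := n) hmom hdeg horth hII
  have hlead_pos (n : ℕ) : 0 < (r n).leadingCoeff :=
    Complex.pos_iff.mpr ⟨(hlead n).1, (hlead n).2.symm⟩
  refine ⟨him, hsymm, hzero, ?_, fun n => ?_⟩
  · rintro m n (h | h)
    · exact hzero m n h
    · rw [hsymm]
      exact hzero n m h
  · rw [gEntry_add_two hmom hdeg horth hII]
    exact (Complex.pos_iff.mp
      (div_pos (mul_pos (hlead_pos n) (hII.coeff_X_pow_succ_pos (n + 1))) (hlead_pos _))).1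

/-- The matrix `g_{m,n} = ⟨T(x·r_n), r_m⟩_σ` is a real symmetric five-diagonal matrix
with positive entries on the second subdiagonal. -/
theorem gMatrix_real_symmetric_fivediagonal (σ : Measure ℝ) [IsProbabilityMeasure σ]
    (hmom : HasFiniteMoments σ) (hpos : PosOnPolys σ)
    (r : ℕ → Polynomial ℂ) (hdeg : ∀ n : ℕ, (r n).degree = n)
    (hlead : ∀ n : ℕ, 0 < ((r n).leadingCoeff).re ∧ ((r n).leadingCoeff).im = 0)
    (horth : ∀ n m : ℕ, ipm σ (r n) (r m) = if n = m then 1 else 0)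
    (T : Module.End ℂ (Polynomial ℂ)) (hII : CondII T) (hIII : CondIII σ T) :
    (∀ m n : ℕ, (gEntry σ T r m n).im = 0) ∧
    (∀ m n : ℕ, gEntry σ T r m n = gEntry σ T r n m) ∧
    (∀ m n : ℕ, n + 2 < m → gEntry σ T r m n = 0) ∧
    (∀ m n : ℕ, n + 2 < m ∨ m + 2 < n → gEntry σ T r m n = 0) ∧
    (∀ n : ℕ, 0 < (gEntry σ T r (n + 2) n).re) :=
  gMatrix_real_symmetric_fivediagonal_general σ hmom hpos r hdeg hlead horth T hII hIII
end
end
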